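/- arXiv:2206.06793 — 6 statements merged into one kernel-verified Lean document; each statement's English description precedes it below -/
import Mathlib

section
/- Every satisfiable sentential first-order standpoint logic formula φ has a model with at most |φ| precisifications, where |φ| is the number of subformulas of φ. Hence for sentential formulas, satisfiability coincides with |φ|-satisfiability. -/
namespace FOSL

/-- Standpoint expressions: e ::= * | s | e∪e | e∩e | e∖e -/
inductive SE (S : Type) : Type
  | star : SE S
  | sym : S → SE S
  | union : SE S → SE S → SE S
  | inter : SE S → SE S → SE S
  | diff : SE S → SE S → SE S

/-- FOSL formulas over predicates `P` (with arities `ar`), constants `C`,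
standpoint symbols `S`; variables are natural numbers. -/
inductive Fm (P : Type) (ar : P → ℕ) (C : Type) (S : Type) : Type
  | atom : (p : P) → (Fin (ar p) → C ⊕ ℕ) → Fm P ar C S
  | eq : (C ⊕ ℕ) → (C ⊕ ℕ) → Fm P ar C S
  | neg : Fm P ar C S → Fm P ar C S
  | conj : Fm P ar C S → Fm P ar C S → Fm P ar C S
  | all : ℕ → Fm P ar C S → Fm P ar C S
  | box : SE S → Fm P ar C S → Fm P ar C S

variable {P : Type} {ar : P → ℕ} {C S : Type}

def Fm.disj (φ ψ : Fm P ar C S) : Fm P ar C S := .neg (.conj (.neg φ) (.neg ψ))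
def Fm.impl (φ ψ : Fm P ar C S) : Fm P ar C S := .neg (.conj φ (.neg ψ))
def Fm.ex (x : ℕ) (φ : Fm P ar C S) : Fm P ar C S := .neg (.all x (.neg φ))
def Fm.dia (e : SE S) (φ : Fm P ar C S) : Fm P ar C S := .neg (.box e (.neg φ))

/-- First-order standpoint structures (constant domain, rigid constants). -/
structure Model (P : Type) (ar : P → ℕ) (C : Type) (S : Type) : Type 1 where
  Dom : Type
  dom_ne : Nonempty Dom
  Prec : Type
  prec_ne : Nonempty Prec
  σ : S → Set Prec
  interpP : Prec → (p : P) → (Fin (ar p) → Dom) → Prop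
  interpC : C → Dom

/-- Homomorphic extension of σ to standpoint expressions, with σ(*) = Π. -/
def Model.σE (M : Model P ar C S) : SE S → Set M.Prec
  | .star => Set.univ
  | .sym s => M.σ s
  | .union e1 e2 => M.σE e1 ∪ M.σE e2
  | .inter e1 e2 => M.σE e1 ∩ M.σE e2
  | .diff e1 e2 => M.σE e1 \ M.σE e2

def Model.termVal (M : Model P ar C S) (v : ℕ → M.Dom) : C ⊕ ℕ → M.Dom
  | .inl c => M.interpC c
  | .inr x => v x

/-- Satisfaction `M, π, v ⊨ φ`. -/
def Model.sat (M : Model P ar C S) : M.Prec → (ℕ → M.Dom) → Fm P ar C S → Prop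
  | π, v, .atom p ts => M.interpP π p fun i => M.termVal v (ts i)
  | _, v, .eq t1 t2 => M.termVal v t1 = M.termVal v t2
  | π, v, .neg φ => ¬ M.sat π v φ
  | π, v, .conj φ ψ => M.sat π v φ ∧ M.sat π v ψ
  | π, v, .all x φ => ∀ δ : M.Dom, M.sat π (Function.update v x δ) φ
  | _, v, .box e φ => ∀ π' ∈ M.σE e, M.sat π' v φ

/-- `M ⊨ φ`: satisfaction at all precisifications and assignments. -/
def Model.satM (M : Model P ar C S) (φ : Fm P ar C S) : Prop :=
  ∀ (π : M.Prec) (v : ℕ → M.Dom), M.sat π v φ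

def tmVars : C ⊕ ℕ → Finset ℕ
  | .inl _ => ∅
  | .inr x => {x}

/-- Free variables. -/
def Fm.fv : Fm P ar C S → Finset ℕ
  | .atom _ ts => Finset.univ.biUnion fun i => tmVars (ts i)
  | .eq t1 t2 => tmVars t1 ∪ tmVars t2
  | .neg φ => φ.fv
  | .conj φ ψ => φ.fv ∪ ψ.fv
  | .all x φ => φ.fv.erase x
  | .box _ φ => φ.fv

/-- Sentential: in every subformula □_e ψ, ψ has no free variables. -/
def Fm.sentential : Fm P ar C S → Prop
  | .atom _ _ => True
  | .eq _ _ => True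
  | .neg φ => φ.sentential
  | .conj φ ψ => φ.sentential ∧ ψ.sentential
  | .all _ φ => φ.sentential
  | .box _ φ => φ.fv = ∅ ∧ φ.sentential

/-- Set of subformulas. -/
def Fm.Sub : Fm P ar C S → Set (Fm P ar C S)
  | .atom p ts => {.atom p ts}
  | .eq t1 t2 => {.eq t1 t2}
  | .neg φ => insert (.neg φ) φ.Sub
  | .conj φ ψ => insert (.conj φ ψ) (φ.Sub ∪ ψ.Sub)
  | .all x φ => insert (.all x φ) φ.Sub
  | .box e φ => insert (.box e φ) φ.Sub

/-- |φ| = number of subformulas of φ. -/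
noncomputable def Fm.size (φ : Fm P ar C S) : ℕ := φ.Sub.ncard

def satisfiable (φ : Fm P ar C S) : Prop := ∃ M : Model P ar C S, M.satM φ

/-- n-satisfiable: has a model with exactly n precisifications. -/
def nsatisfiable (n : ℕ) (φ : Fm P ar C S) : Prop :=
  ∃ M : Model P ar C S, M.satM φ ∧ Nat.card M.Prec = n

def Fm.boxfree : Fm P ar C S → Prop
  | .atom _ _ => True
  | .eq _ _ => True
  | .neg φ => φ.boxfree
  | .conj φ ψ => φ.boxfree ∧ ψ.boxfree
  | .all _ φ => φ.boxfree
  | .box _ _ => False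

/-- Standpoint standard normal form: no nested modalities. -/
def Fm.ssnf : Fm P ar C S → Prop
  | .atom _ _ => True
  | .eq _ _ => True
  | .neg φ => φ.ssnf
  | .conj φ ψ => φ.ssnf ∧ ψ.ssnf
  | .all _ φ => φ.ssnf
  | .box _ φ => φ.boxfree

/-- Restriction of a standpoint structure to a nonempty subset of precisifications. -/
def Model.restrict (M : Model P ar C S) (Ps : Set M.Prec) (h : Ps.Nonempty) :
    Model P ar C S where
  Dom := M.Dom
  dom_ne := M.dom_ne
  Prec := Ps
  prec_ne := h.to_subtype
  σ := fun s => {π : Ps | (π : M.Prec) ∈ M.σ s}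
  interpP := fun π => M.interpP π
  interpC := M.interpC

/-! ### Plain first-order logic -/

inductive FO (Q : Type) (arQ : Q → ℕ) (C : Type) : Type
  | tt
  | atom (q : Q) (ts : Fin (arQ q) → C ⊕ ℕ)
  | eq (t1 t2 : C ⊕ ℕ)
  | neg (φ : FO Q arQ C)
  | conj (φ ψ : FO Q arQ C)
  | all (x : ℕ) (φ : FO Q arQ C)

variable {Q : Type} {arQ : Q → ℕ}

def FO.impl (φ ψ : FO Q arQ C) : FO Q arQ C := .neg (.conj φ (.neg ψ))

def FO.conjList : List (FO Q arQ C) → FO Q arQ C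
  | [] => .tt
  | φ :: l => .conj φ (FO.conjList l)

structure FOModel (Q : Type) (arQ : Q → ℕ) (C : Type) : Type 1 where
  Dom : Type
  dom_ne : Nonempty Dom
  interp : (q : Q) → (Fin (arQ q) → Dom) → Prop
  interpC : C → Dom

def FOModel.termVal (I : FOModel Q arQ C) (v : ℕ → I.Dom) : C ⊕ ℕ → I.Dom
  | .inl c => I.interpC c
  | .inr x => v x

def FOModel.sat (I : FOModel Q arQ C) : (ℕ → I.Dom) → FO Q arQ C → Prop
  | _, .tt => True
  | v, .atom q ts => I.interp q fun i => I.termVal v (ts i)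
  | v, .eq t1 t2 => I.termVal v t1 = I.termVal v t2
  | v, .neg φ => ¬ I.sat v φ
  | v, .conj φ ψ => I.sat v φ ∧ I.sat v ψ
  | v, .all x φ => ∀ δ : I.Dom, I.sat (Function.update v x δ) φ

def FOModel.satM (I : FOModel Q arQ C) (φ : FO Q arQ C) : Prop := ∀ v, I.sat v φ

def fosatisfiable (φ : FO Q arQ C) : Prop := ∃ I : FOModel Q arQ C, I.satM φ

/-! ### Translation to plain FO -/

/-- Translated vocabulary: a predicate P_π for each P and π, and nullary
predicates s_π (for `some s`) and *_π (for `none`). -/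
abbrev TQ (P S Pre : Type) : Type := (P × Pre) ⊕ (Option S × Pre)

def tAr (ar : P → ℕ) {S Pre : Type} : TQ P S Pre → ℕ
  | .inl (p, _) => ar p
  | .inr _ => 0

variable {Pre : Type}

/-- trans_E(π, e). -/
def transE (π : Pre) : SE S → FO (TQ P S Pre) (tAr ar) C
  | .star => .atom (.inr (none, π)) Fin.elim0
  | .sym s => .atom (.inr (some s, π)) Fin.elim0
  | .union e1 e2 => .neg (.conj (.neg (transE π e1)) (.neg (transE π e2)))
  | .inter e1 e2 => .conj (transE π e1) (transE π e2)
  | .diff e1 e2 => .conj (transE π e1) (.neg (transE π e2))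

/-- trans_n(π, φ). -/
noncomputable def transF [Fintype Pre] (π : Pre) : Fm P ar C S → FO (TQ P S Pre) (tAr ar) C
  | .atom p ts => .atom (.inl (p, π)) ts
  | .eq t1 t2 => .eq t1 t2
  | .neg φ => .neg (transF π φ)
  | .conj φ ψ => .conj (transF π φ) (transF π ψ)
  | .all x φ => .all x (transF π φ)
  | .box e φ =>
      FO.conjList ((Finset.univ.toList).map fun π' : Pre =>
        FO.impl (transE π' e) (transF π' φ))

/-- Trans_n(φ) = ⋀_π trans_n(π, φ) ∧ ⋀_π *_π. -/
noncomputable def TransN [Fintype Pre] (φ : Fm P ar C S) : FO (TQ P S Pre) (tAr ar) C :=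
  .conj (FO.conjList ((Finset.univ.toList).map fun π : Pre => transF π φ))
        (FO.conjList ((Finset.univ.toList).map fun π : Pre =>
          FO.atom (.inr (none, π)) Fin.elim0))

/-- The plain first-order structure I_M associated with a standpoint structure M. -/
def Model.toFO (M : Model P ar C S) : FOModel (TQ P S M.Prec) (tAr ar) C where
  Dom := M.Dom
  dom_ne := M.dom_ne
  interp := fun q => match q with
    | .inl (p, π) => fun args => M.interpP π p args
    | .inr (none, _) => fun _ => True
    | .inr (some s, π) => fun _ => π ∈ M.σ s
  interpC := M.interpC

/-! The precisifications of the small model are indexed by the subformulas of `φ`. A subformula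
`□_e ψ` has a closed body, so whether a precisification refutes `ψ` does not depend on the
variable assignment: one precisification of `σ(e)` refuting `ψ`, if there is any, serves every
assignment. Pulling a model of `φ` back along a map that picks such a refuter for each boxed
subformula (repetitions are harmless) preserves the truth of `φ` and leaves exactly `|φ|`
precisifications. -/

lemma Fm.mem_Sub_self (φ : Fm P ar C S) : φ ∈ φ.Sub := by
  cases φ <;> simp [Fm.Sub]

lemma Fm.finite_Sub (φ : Fm P ar C S) : φ.Sub.Finite := by
  induction φ with
  | atom p ts => exact Set.finite_singleton _
  | eq t1 t2 => exact Set.finite_singleton _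
  | neg φ ih => exact ih.insert _
  | conj φ ψ ih1 ih2 => exact (ih1.union ih2).insert _
  | all x φ ih => exact ih.insert _
  | box e φ ih => exact ih.insert _

lemma Fm.size_pos (φ : Fm P ar C S) : 0 < φ.size :=
  (Set.ncard_pos φ.finite_Sub).mpr ⟨φ, φ.mem_Sub_self⟩

lemma Fm.sentential.fv_eq_empty_of_box_mem_Sub {φ ψ : Fm P ar C S} {e : SE S}
    (hφ : φ.sentential) (h : Fm.box e ψ ∈ φ.Sub) : ψ.fv = ∅ := by
  induction φ with
  | atom p ts => simp [Fm.Sub] at h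
  | eq t1 t2 => simp [Fm.Sub] at h
  | neg φ ih => simp only [Fm.Sub, Set.mem_insert_iff, reduceCtorEq, false_or] at h; exact ih hφ h
  | conj φ₁ φ₂ ih₁ ih₂ =>
    simp only [Fm.Sub, Set.mem_insert_iff, reduceCtorEq, false_or, Set.mem_union] at h
    exact h.elim (ih₁ hφ.1) (ih₂ hφ.2)
  | all x φ ih => simp only [Fm.Sub, Set.mem_insert_iff, reduceCtorEq, false_or] at h; exact ih hφ h
  | box e' φ ih =>
    simp only [Fm.Sub, Set.mem_insert_iff, Fm.box.injEq] at h
    rcases h with ⟨-, rfl⟩ | h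
    exacts [hφ.1, ih hφ.2 h]

namespace Model

lemma termVal_congr (M : Model P ar C S) {v v' : ℕ → M.Dom} {t : C ⊕ ℕ}
    (h : ∀ x ∈ tmVars t, v x = v' x) : M.termVal v t = M.termVal v' t := by
  cases t with
  | inl c => rfl
  | inr x => exact h x (Finset.mem_singleton_self x)

lemma sat_congr (M : Model P ar C S) (φ : Fm P ar C S) {π : M.Prec} {v v' : ℕ → M.Dom}
    (h : ∀ x ∈ φ.fv, v x = v' x) : M.sat π v φ ↔ M.sat π v' φ := by
  induction φ generalizing π v v' with
  | atom p ts =>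
    simp only [Model.sat]
    congr! 2 with i
    exact M.termVal_congr fun x hx => h x (Finset.mem_biUnion.2 ⟨i, Finset.mem_univ _, hx⟩)
  | eq t1 t2 =>
    simp only [Model.sat, Fm.fv, Finset.mem_union] at h ⊢
    rw [M.termVal_congr fun x hx => h x (.inl hx), M.termVal_congr fun x hx => h x (.inr hx)]
  | neg φ ih => exact not_congr (ih h)
  | conj φ ψ ih₁ ih₂ =>
    simp only [Fm.fv, Finset.mem_union] at h
    exact and_congr (ih₁ fun x hx => h x (.inl hx)) (ih₂ fun x hx => h x (.inr hx))
  | all x φ ih =>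
    refine forall_congr' fun δ => ih fun y hy => ?_
    by_cases hyx : y = x
    · simp [hyx]
    · simp only [Function.update_of_ne hyx]
      exact h y (Finset.mem_erase.2 ⟨hyx, hy⟩)
  | box e φ ih => exact forall₂_congr fun π' _ => ih h

lemma sat_iff_of_fv_eq_empty (M : Model P ar C S) {φ : Fm P ar C S} (hφ : φ.fv = ∅)
    (π : M.Prec) (v v' : ℕ → M.Dom) : M.sat π v φ ↔ M.sat π v' φ :=
  M.sat_congr φ fun x hx => by simp [hφ] at hx

lemma exists_refuter_of_fv_eq_empty (M : Model P ar C S) (e : SE S) {ψ : Fm P ar C S}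
    (hψ : ψ.fv = ∅) :
    ∃ π : M.Prec, ∀ v, (∃ π' ∈ M.σE e, ¬ M.sat π' v ψ) → π ∈ M.σE e ∧ ¬ M.sat π v ψ := by
  by_cases h : ∃ π ∈ M.σE e, ∃ v, ¬ M.sat π v ψ
  · obtain ⟨π, hπe, v, hπ⟩ := h
    exact ⟨π, fun v' _ => ⟨hπe, (M.sat_iff_of_fv_eq_empty hψ π v' v).not.2 hπ⟩⟩
  · exact ⟨M.prec_ne.some, fun v ⟨π, hπe, hπ⟩ => absurd ⟨π, hπe, v, hπ⟩ h⟩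

def comap (M : Model P ar C S) {T : Type} [Nonempty T] (f : T → M.Prec) : Model P ar C S where
  Dom := M.Dom
  dom_ne := M.dom_ne
  Prec := T
  prec_ne := ‹_›
  σ s := f ⁻¹' M.σ s
  interpP t := M.interpP (f t)
  interpC := M.interpC

variable (M : Model P ar C S) {T : Type} [Nonempty T] (f : T → M.Prec)

lemma comap_σE (e : SE S) : (M.comap f).σE e = f ⁻¹' M.σE e := by
  induction e with
  | star => rfl
  | sym s => rfl
  | union e1 e2 ih1 ih2 => simp only [Model.σE, ih1, ih2]; rfl
  | inter e1 e2 ih1 ih2 => simp only [Model.σE, ih1, ih2]; rfl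
  | diff e1 e2 ih1 ih2 => simp only [Model.σE, ih1, ih2]; rfl

lemma comap_sat_iff {φ : Fm P ar C S}
    (hf : ∀ e ψ, Fm.box e ψ ∈ φ.Sub → ∀ v, (∃ π ∈ M.σE e, ¬ M.sat π v ψ) →
      ∃ t, f t ∈ M.σE e ∧ ¬ M.sat (f t) v ψ)
    (t : T) (v : ℕ → M.Dom) : (M.comap f).sat t v φ ↔ M.sat (f t) v φ := by
  induction φ generalizing t v with
  | atom _ _ => rfl
  | eq _ _ => rfl
  | neg φ ih => exact not_congr (ih (fun e ψ h => hf e ψ (Set.mem_insert_of_mem _ h)) t v)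
  | conj φ ψ ih₁ ih₂ =>
    exact and_congr
      (ih₁ (fun e χ h => hf e χ (Set.mem_insert_of_mem _ (.inl h))) t v)
      (ih₂ (fun e χ h => hf e χ (Set.mem_insert_of_mem _ (.inr h))) t v)
  | all x φ ih =>
    exact forall_congr' fun δ =>
      ih (fun e ψ h => hf e ψ (Set.mem_insert_of_mem _ h)) t (Function.update v x δ)
  | box e ψ ih =>
    have ih' := ih fun e χ h => hf e χ (Set.mem_insert_of_mem _ h)
    simp only [Model.sat, comap_σE]
    refine ⟨fun hall π hπ => ?_, fun hall t' ht' => (ih' t' v).2 (hall _ ht')⟩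
    by_contra hπψ
    obtain ⟨t', ht'e, ht'ψ⟩ := hf e ψ (Fm.mem_Sub_self _) v ⟨π, hπ, hπψ⟩
    exact ht'ψ ((ih' t' v).1 (hall t' ht'e))

end Model

lemma Fm.sentential.exists_refuter (M : Model P ar C S) {φ : Fm P ar C S} (hφ : φ.sentential)
    (χ : φ.Sub) : ∃ π : M.Prec, ∀ e ψ, χ.1 = Fm.box e ψ →
      ∀ v, (∃ π' ∈ M.σE e, ¬ M.sat π' v ψ) → π ∈ M.σE e ∧ ¬ M.sat π v ψ := by
  obtain ⟨χ, hχ⟩ := χ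
  cases χ with
  | box e ψ =>
    obtain ⟨π, hπ⟩ := M.exists_refuter_of_fv_eq_empty e (hφ.fv_eq_empty_of_box_mem_Sub hχ)
    exact ⟨π, by rintro _ _ ⟨⟩; exact hπ⟩
  | _ => exact ⟨M.prec_ne.some, by rintro _ _ ⟨⟩⟩

lemma Fm.sentential.nsatisfiable_size {φ : Fm P ar C S} (hφ : φ.sentential)
    (h : satisfiable φ) : nsatisfiable φ.size φ := by
  obtain ⟨M, hM⟩ := h
  choose w hw using hφ.exists_refuter M
  have : Nonempty φ.Sub := ⟨⟨φ, φ.mem_Sub_self⟩⟩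
  refine ⟨M.comap w, fun χ v => (M.comap_sat_iff w ?_ χ v).2 (hM _ v), Nat.card_coe_set_eq _⟩
  exact fun e ψ hmem v hrefuted => ⟨⟨_, hmem⟩, hw ⟨_, hmem⟩ e ψ rfl v hrefuted⟩

/-- Small model property: every satisfiable sentential FOSL formula has a model
with at most |φ| precisifications; hence satisfiability and |φ|-satisfiability
coincide for sentential formulas. -/
theorem small_model_property (P : Type) (ar : P → ℕ) (C S : Type)
    (φ : Fm P ar C S) (hφ : φ.sentential) :
    (satisfiable φ →
      ∃ M : Model P ar C S, M.satM φ ∧ Finite M.Prec ∧ Nat.card M.Prec ≤ φ.size) ∧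
    (satisfiable φ ↔ nsatisfiable φ.size φ) := by
  refine ⟨fun h => ?_, hφ.nsatisfiable_size, fun ⟨M, hM, _⟩ => ⟨M, hM⟩⟩
  obtain ⟨M, hM, hcard⟩ := hφ.nsatisfiable_size h
  exact ⟨M, hM, Nat.finite_of_card_ne_zero (hcard ▸ φ.size_pos.ne'), hcard.le⟩

end FOSL
end

section
/- Pruning preserves truth of sentential formulas: Let M = (Δ, Π, σ, γ) be a model of a sentential FOSL formula φ, and let P ⊆ Π be any nonempty subset such that for each subformula □_e ψ of φ with M ⊭ □_e ψ, P contains some π with π ∈ σ_E(e) and M, π ⊭ ψ. Let M' be the restriction of M to P. Then for all subformulas ψ of φ, all π ∈ P, and all variable assignments v: M, π, v ⊨ ψ if and only if M', π, v ⊨ ψ. In particular M' ⊨ φ. -/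
namespace FOSL

variable {P : Type} {ar : P → ℕ} {C S : Type}

variable {Q : Type} {arQ : Q → ℕ}

variable {Pre : Type}

def Model.ContainsBoxWitnesses (M : Model P ar C S) (φ : Fm P ar C S) (Ps : Set M.Prec) : Prop :=
  ∀ (e : SE S) (ψ : Fm P ar C S), Fm.box e ψ ∈ φ.Sub → ¬ M.satM (Fm.box e ψ) →
    ∃ π ∈ Ps, π ∈ M.σE e ∧ ∀ v : ℕ → M.Dom, ¬ M.sat π v ψ

namespace Fm

theorem mem_Sub_self_s3 (φ : Fm P ar C S) : φ ∈ φ.Sub := by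
  cases φ <;> simp [Fm.Sub]

theorem Sub_subset_of_mem {φ ψ : Fm P ar C S} (hψ : ψ ∈ φ.Sub) : ψ.Sub ⊆ φ.Sub := by
  induction φ with
  | atom | eq =>
    rw [Set.mem_singleton_iff.mp hψ]
  | neg φ ih | all _ φ ih | box _ φ ih =>
    rcases hψ with rfl | hψ
    · exact subset_rfl
    · exact (ih hψ).trans (Set.subset_insert _ _)
  | conj φ₁ φ₂ ih₁ ih₂ =>
    rcases hψ with rfl | hψ | hψ
    · exact subset_rfl
    · exact (ih₁ hψ).trans (Set.subset_union_left.trans (Set.subset_insert _ _))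
    · exact (ih₂ hψ).trans (Set.subset_union_right.trans (Set.subset_insert _ _))

end Fm

namespace Model

theorem ContainsBoxWitnesses.mono {M : Model P ar C S} {φ ψ : Fm P ar C S} {Ps : Set M.Prec}
    (hwit : M.ContainsBoxWitnesses φ Ps) (hsub : ψ.Sub ⊆ φ.Sub) :
    M.ContainsBoxWitnesses ψ Ps :=
  fun e χ hχ => hwit e χ (hsub hχ)

variable (M : Model P ar C S) {Ps : Set M.Prec} (h : Ps.Nonempty)

theorem termVal_restrict (v : ℕ → M.Dom) : (M.restrict Ps h).termVal v = M.termVal v := by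
  funext t
  cases t <;> rfl

theorem mem_σE_restrict (e : SE S) (π : Ps) :
    π ∈ (M.restrict Ps h).σE e ↔ (π : M.Prec) ∈ M.σE e := by
  induction e with
  | star | sym => exact Iff.rfl
  | union _ _ ih₁ ih₂ => exact or_congr ih₁ ih₂
  | inter _ _ ih₁ ih₂ => exact and_congr ih₁ ih₂
  | diff _ _ ih₁ ih₂ => exact and_congr ih₁ (not_congr ih₂)

/-- The truth of `□_e ψ` can only be lost by pruning if some precisification of `σ_E(e)`
falsifying `ψ` is removed; the witnesses rule this out. -/
theorem sat_restrict_iff {ψ : Fm P ar C S} (hwit : M.ContainsBoxWitnesses ψ Ps)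
    (π : Ps) (v : ℕ → M.Dom) : M.sat π v ψ ↔ (M.restrict Ps h).sat π v ψ := by
  induction ψ generalizing π v with
  | atom | eq =>
    simp only [Model.sat, termVal_restrict]
    exact Iff.rfl
  | neg ψ ih =>
    exact not_congr (ih (hwit.mono (Set.subset_insert _ _)) π v)
  | conj ψ₁ ψ₂ ih₁ ih₂ =>
    exact and_congr
      (ih₁ (hwit.mono (Set.subset_union_left.trans (Set.subset_insert _ _))) π v)
      (ih₂ (hwit.mono (Set.subset_union_right.trans (Set.subset_insert _ _))) π v)
  | all x ψ ih =>
    exact forall_congr' fun δ =>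
      ih (hwit.mono (Set.subset_insert _ _)) π (Function.update v x δ)
  | box e ψ ih =>
    have ih := ih (hwit.mono (Set.subset_insert _ _))
    constructor
    · intro hbox π' hπ'
      exact (ih π' v).mp (hbox π'.1 ((M.mem_σE_restrict h e π').mp hπ'))
    · intro hbox
      by_contra hfalse
      obtain ⟨π₁, hπ₁, hπ₁e, hπ₁ψ⟩ :=
        hwit e ψ (Fm.mem_Sub_self_s3 _) fun hvalid => hfalse (hvalid π v)
      exact hπ₁ψ v ((ih ⟨π₁, hπ₁⟩ v).mpr
        (hbox ⟨π₁, hπ₁⟩ ((M.mem_σE_restrict h e ⟨π₁, hπ₁⟩).mpr hπ₁e)))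

end Model

theorem pruning_preserves_truth_general (P : Type) (ar : P → ℕ) (C S : Type)
    (M : Model P ar C S) (φ : Fm P ar C S)
    (hM : M.satM φ)
    (Ps : Set M.Prec) (h : Ps.Nonempty)
    (hwit : ∀ (e : SE S) (ψ : Fm P ar C S), Fm.box e ψ ∈ φ.Sub →
      ¬ M.satM (Fm.box e ψ) →
      ∃ π ∈ Ps, π ∈ M.σE e ∧ ∀ v : ℕ → M.Dom, ¬ M.sat π v ψ) :
    (∀ ψ ∈ φ.Sub, ∀ (π : Ps) (v : ℕ → M.Dom),
      (M.sat (π : M.Prec) v ψ ↔ (M.restrict Ps h).sat π v ψ)) ∧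
    (M.restrict Ps h).satM φ := by
  have hwit : M.ContainsBoxWitnesses φ Ps := hwit
  have truth_preserved : ∀ ψ ∈ φ.Sub, ∀ (π : Ps) (v : ℕ → M.Dom),
      M.sat π v ψ ↔ (M.restrict Ps h).sat π v ψ := fun ψ hψ =>
    M.sat_restrict_iff h (hwit.mono (Fm.Sub_subset_of_mem hψ))
  exact ⟨truth_preserved, fun π v =>
    (truth_preserved φ (Fm.mem_Sub_self_s3 φ) π v).mp (hM π.1 v)⟩

/-- Pruning preserves truth of sentential formulas: restricting a model of a
sentential formula φ to a nonempty set P of precisifications containing a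
witness for every subformula □_e ψ of φ falsified in M preserves the truth of
all subformulas at precisifications in P; in particular M' ⊨ φ. -/
theorem pruning_preserves_truth (P : Type) (ar : P → ℕ) (C S : Type)
    (M : Model P ar C S) (φ : Fm P ar C S)
    (hφ : φ.sentential) (hM : M.satM φ)
    (Ps : Set M.Prec) (h : Ps.Nonempty)
    (hwit : ∀ (e : SE S) (ψ : Fm P ar C S), Fm.box e ψ ∈ φ.Sub →
      ¬ M.satM (Fm.box e ψ) →
      ∃ π ∈ Ps, π ∈ M.σE e ∧ ∀ v : ℕ → M.Dom, ¬ M.sat π v ψ) :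
    (∀ ψ ∈ φ.Sub, ∀ (π : Ps) (v : ℕ → M.Dom),
      (M.sat (π : M.Prec) v ψ ↔ (M.restrict Ps h).sat π v ψ)) ∧
    (M.restrict Ps h).satM φ :=
  pruning_preserves_truth_general P ar C S M φ hM Ps h hwit

end FOSL
end

section
/- Translation correctness for structures: Let φ be a sentential FOSL formula in standpoint standard normal form (no modal operator occurs inside the scope of another), over signature (P, C, S). Let M = (Δ, Π_n, σ, γ) be a standpoint structure and I_M the associated plain first-order structure over the translated vocabulary (predicates P_π for P ∈ P and π ∈ Π_n with P_π interpreted as P^{γ(π)}, nullary predicates s_π true iff π ∈ σ(s), *_π always true, constants interpreted as in M). Then for every subformula ψ of φ, every π ∈ Π_n, and every variable assignment v: M, π, v ⊨ ψ if and only if I_M, v ⊨ trans_n(π, ψ), where trans_n(π, P(t₁,…,tₖ)) = P_π(t₁,…,tₖ), trans_n commutes with ¬, ∧, ∀, and trans_n(π', □_e ψ) = ⋀_{π ∈ Π_n} (trans_E(π, e) → trans_n(π, ψ)). -/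
namespace FOSL

variable {P : Type} {ar : P → ℕ} {C S : Type}

variable {Q : Type} {arQ : Q → ℕ}

variable {Pre : Type}

/-! The proof is a structural induction on ψ, for all π and v at once. Every connective
other than □ is translated homomorphically at the same precisification. For □_e ψ the
finite conjunction over Π_n ranges over all π', and trans_E(π', e) holds in I_M exactly when
π' ∈ σ_E(e), so the conjunction expresses M, π', v ⊨ ψ for all π' ∈ σ_E(e). -/

section FOSemantics

variable (I : FOModel Q arQ C) (v : ℕ → I.Dom)

theorem FOModel.sat_impl (φ ψ : FO Q arQ C) :
    I.sat v (φ.impl ψ) ↔ (I.sat v φ → I.sat v ψ) := by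
  simp only [FO.impl, FOModel.sat, not_and, not_not]

theorem FOModel.sat_conjList (l : List (FO Q arQ C)) :
    I.sat v (FO.conjList l) ↔ ∀ φ ∈ l, I.sat v φ := by
  induction l with
  | nil => simp [FO.conjList, FOModel.sat]
  | cons φ l ih => simp [FO.conjList, FOModel.sat, ih]

theorem FOModel.sat_conjList_map_univ {ι : Type} [Fintype ι] (f : ι → FO Q arQ C) :
    I.sat v (FO.conjList (Finset.univ.toList.map f)) ↔ ∀ i, I.sat v (f i) := by
  simp [FOModel.sat_conjList]

end FOSemantics

section Translation

variable (M : Model P ar C S) (v : ℕ → M.Dom)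

theorem Model.toFO_termVal : M.toFO.termVal v = M.termVal v := by
  funext t
  cases t <;> rfl

theorem Model.toFO_sat_transE (π : M.Prec) (e : SE S) :
    M.toFO.sat v (transE π e) ↔ π ∈ M.σE e := by
  induction e with
  | star | sym s => simp [transE, FOModel.sat, Model.toFO, Model.σE]
  | union e₁ e₂ ih₁ ih₂ =>
    simp only [transE, FOModel.sat, Model.σE, ih₁, ih₂, Set.mem_union]
    tauto
  | inter e₁ e₂ ih₁ ih₂ => simp [transE, FOModel.sat, Model.σE, ih₁, ih₂]
  | diff e₁ e₂ ih₁ ih₂ => simp [transE, FOModel.sat, Model.σE, ih₁, ih₂]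

theorem Model.sat_iff_toFO_sat_transF [Fintype M.Prec] (ψ : Fm P ar C S) (π : M.Prec) :
    M.sat π v ψ ↔ M.toFO.sat v (transF π ψ) := by
  induction ψ generalizing π v with
  | atom p ts =>
    simp only [Model.sat, transF, FOModel.sat, Model.toFO_termVal]
    rfl
  | eq t₁ t₂ => simp only [Model.sat, transF, FOModel.sat, Model.toFO_termVal]; rfl
  | neg ψ ih => simp only [Model.sat, transF, FOModel.sat, ih]
  | conj ψ₁ ψ₂ ih₁ ih₂ => simp only [Model.sat, transF, FOModel.sat, ih₁, ih₂]
  | all x ψ ih => exact forall_congr' fun δ => ih _ π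
  | box e ψ ih =>
    refine Iff.trans ?_ (M.toFO.sat_conjList_map_univ v _).symm
    simp only [Model.sat, ih]
    exact forall_congr' fun π' =>
      (imp_congr_left (M.toFO_sat_transE v π' e)).symm.trans (M.toFO.sat_impl v _ _).symm

end Translation

theorem trans_correct_general (P : Type) (ar : P → ℕ) (C S : Type)
    (M : Model P ar C S) [Fintype M.Prec]
    (φ : Fm P ar C S) :
    ∀ ψ ∈ φ.Sub, ∀ (π : M.Prec) (v : ℕ → M.Dom),
      M.sat π v ψ ↔ M.toFO.sat v (transF π ψ) :=
  fun ψ _ π v => M.sat_iff_toFO_sat_transF v ψ π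

/-- Translation correctness for structures: for a sentential formula φ in
SSNF and a standpoint structure M with finitely many precisifications,
M, π, v ⊨ ψ iff I_M, v ⊨ trans_n(π, ψ) for every subformula ψ of φ. -/
theorem trans_correct (P : Type) (ar : P → ℕ) (C S : Type)
    (M : Model P ar C S) [Fintype M.Prec]
    (φ : Fm P ar C S) (hs : φ.sentential) (hn : φ.ssnf) :
    ∀ ψ ∈ φ.Sub, ∀ (π : M.Prec) (v : ℕ → M.Dom),
      M.sat π v ψ ↔ M.toFO.sat v (transF π ψ) :=
  trans_correct_general P ar C S M φ

end FOSL
end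

section
/- n-satisfiability via translation: A FOSL formula φ (sentential, in standpoint standard normal form) is n-satisfiable if and only if the plain first-order formula Trans_n(φ) = ⋀_{π ∈ Π_n} trans_n(π, φ) ∧ ⋀_{π ∈ Π_n} *_π is satisfiable in first-order logic. -/
/-!
A standpoint structure whose precisifications are enumerated by `Fin n` carries the same data as
a first-order structure over the translated vocabulary: `P_π` records how `P` is read at `π` and
`s_π` whether `π ∈ σ(s)`. Under this correspondence `trans_n(π, ψ)` holds iff `ψ` holds at `π`,
by induction on `ψ`; for `□_e ψ` this works because the conjunction ranges over every
precisification. The conjuncts `*_π` pin the star predicates to true, as `σ(*) = Π` demands.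
-/

namespace FOSL

variable {P : Type} {ar : P → ℕ} {C S : Type}

variable {Q : Type} {arQ : Q → ℕ}

variable {Pre : Type}

namespace FOModel

@[simp]
lemma sat_conjList_s6 (I : FOModel Q arQ C) (v : ℕ → I.Dom) (l : List (FO Q arQ C)) :
    I.sat v (FO.conjList l) ↔ ∀ ψ ∈ l, I.sat v ψ := by
  induction l with
  | nil => simp [FO.conjList, FOModel.sat]
  | cons a l ih => simp [FO.conjList, FOModel.sat, ih]

@[simp]
lemma sat_impl_s6 (I : FOModel Q arQ C) (v : ℕ → I.Dom) (a b : FO Q arQ C) :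
    I.sat v (FO.impl a b) ↔ (I.sat v a → I.sat v b) := by
  simp [FO.impl, FOModel.sat]

end FOModel

lemma tAr_inr_args_eq {D : Type} {x : Option S × Pre}
    (a : Fin (tAr ar (.inr x : TQ P S Pre)) → D) : a = Fin.elim0 :=
  funext fun i => i.elim0

/-- `Model.toFO` with the precisifications renamed along `g`. -/
abbrev Model.toFOAlong (M : Model P ar C S) (g : Pre → M.Prec) :
    FOModel (TQ P S Pre) (tAr ar) C where
  Dom := M.Dom
  dom_ne := M.dom_ne
  interp := fun q => match q with
    | .inl (p, π) => fun args => M.interpP (g π) p args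
    | .inr (none, _) => fun _ => True
    | .inr (some s, π) => fun _ => g π ∈ M.σ s
  interpC := M.interpC

abbrev FOModel.toModel [Nonempty Pre] (I : FOModel (TQ P S Pre) (tAr ar) C) : Model P ar C S where
  Dom := I.Dom
  dom_ne := I.dom_ne
  Prec := Pre
  prec_ne := inferInstance
  σ := fun s => {π | I.interp (.inr (some s, π)) Fin.elim0}
  interpP := fun π p => I.interp (.inl (p, π))
  interpC := I.interpC

namespace Model

variable (M : Model P ar C S) {g : Pre → M.Prec}

lemma toFOAlong_termVal (v : ℕ → M.Dom) (t : C ⊕ ℕ) :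
    (M.toFOAlong g).termVal v t = M.termVal v t := by
  cases t <;> rfl

lemma toFOAlong_sat_transE (v : ℕ → M.Dom) (π : Pre) (e : SE S) :
    (M.toFOAlong g).sat v (transE π e) ↔ g π ∈ M.σE e := by
  induction e with
  | star | sym s => simp [transE, FOModel.sat, toFOAlong, σE]
  | union e1 e2 ih1 ih2 =>
      simp only [transE, FOModel.sat, σE, Set.mem_union, ih1, ih2]
      tauto
  | inter e1 e2 ih1 ih2 => simp only [transE, FOModel.sat, σE, Set.mem_inter_iff, ih1, ih2]
  | diff e1 e2 ih1 ih2 => simp only [transE, FOModel.sat, σE, Set.mem_sdiff, ih1, ih2]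

lemma toFOAlong_sat_transF [Fintype Pre] (hg : Function.Surjective g)
    (ψ : Fm P ar C S) (π : Pre) (v : ℕ → M.Dom) :
    (M.toFOAlong g).sat v (transF π ψ) ↔ M.sat (g π) v ψ := by
  induction ψ generalizing π v with
  | atom p ts =>
      simp only [transF, FOModel.sat, sat, toFOAlong_termVal]
      rfl
  | eq t1 t2 => simp only [transF, FOModel.sat, sat, toFOAlong_termVal]
  | neg ψ ih => simp only [transF, FOModel.sat, sat, ih]
  | conj ψ χ ih1 ih2 => simp only [transF, FOModel.sat, sat, ih1, ih2]
  | all x ψ ih => exact forall_congr' fun δ => ih π _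
  | box e ψ ih =>
      simp only [transF, FOModel.sat_conjList_s6, List.mem_map, Finset.mem_toList,
        Finset.mem_univ, true_and, forall_exists_index, forall_apply_eq_imp_iff,
        FOModel.sat_impl_s6, toFOAlong_sat_transE, ih, sat]
      exact (hg.forall (p := fun ρ => ρ ∈ M.σE e → M.sat ρ v ψ)).symm

end Model

lemma FOModel.toModel_toFOAlong_id [Nonempty Pre] (I : FOModel (TQ P S Pre) (tAr ar) C)
    (hstar : ∀ π : Pre, I.interp (.inr (none, π)) Fin.elim0) :
    (I.toModel (S := S)).toFOAlong id = I := by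
  obtain ⟨Dom, dom_ne, interp, interpC⟩ := I
  simp only [Model.toFOAlong, FOModel.toModel, FOModel.mk.injEq, heq_eq_eq, true_and, and_true]
  funext q args
  rcases q with ⟨p, π⟩ | ⟨_ | s, π⟩
  · rfl
  · rw [tAr_inr_args_eq args]
    exact propext (iff_true_intro (hstar π)).symm
  · rw [tAr_inr_args_eq args]
    rfl

lemma FOModel.satM_TransN_iff [Fintype Pre] (I : FOModel (TQ P S Pre) (tAr ar) C)
    (φ : Fm P ar C S) :
    I.satM (TransN φ) ↔
      (∀ π v, I.sat v (transF π φ)) ∧ ∀ π : Pre, I.interp (.inr (none, π)) Fin.elim0 := by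
  obtain ⟨v₀⟩ := I.dom_ne
  simp only [satM, TransN, sat, sat_conjList_s6, List.mem_map, Finset.mem_toList,
    Finset.mem_univ, true_and, forall_exists_index, forall_apply_eq_imp_iff, tAr_inr_args_eq]
  exact ⟨fun h => ⟨fun π v => (h v).1 π, fun π => (h fun _ => v₀).2 π⟩,
    fun h v => ⟨fun π => h.1 π v, h.2⟩⟩

theorem nsat_iff_transN_sat_general (P : Type) (ar : P → ℕ) (C S : Type)
    (φ : Fm P ar C S)
    (n : ℕ) (hpos : 0 < n) :
    nsatisfiable n φ ↔ fosatisfiable (TransN (Pre := Fin n) (ar := ar) (S := S) φ) := by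
  constructor
  · rintro ⟨M, hM, hcard⟩
    have : Finite M.Prec := Nat.finite_of_card_ne_zero (by omega)
    let e : M.Prec ≃ Fin n := Finite.equivFinOfCardEq hcard
    refine ⟨M.toFOAlong e.symm, (FOModel.satM_TransN_iff _ φ).2 ⟨fun π v => ?_, fun _ => trivial⟩⟩
    exact (M.toFOAlong_sat_transF e.symm.surjective φ π v).2 (hM _ v)
  · rintro ⟨I, hI⟩
    have : Nonempty (Fin n) := ⟨⟨0, hpos⟩⟩
    obtain ⟨hφ, hstar⟩ := (FOModel.satM_TransN_iff I φ).1 hI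
    rw [← I.toModel_toFOAlong_id hstar] at hφ
    refine ⟨I.toModel, fun π v => ?_, Nat.card_eq_fintype_card.trans (Fintype.card_fin n)⟩
    exact (I.toModel.toFOAlong_sat_transF Function.surjective_id φ π v).1 (hφ π v)

/-- n-satisfiability via translation: a sentential SSNF formula φ is
n-satisfiable iff Trans_n(φ) is satisfiable in plain first-order logic. -/
theorem nsat_iff_transN_sat (P : Type) (ar : P → ℕ) (C S : Type)
    (φ : Fm P ar C S) (hs : φ.sentential) (hn : φ.ssnf)
    (n : ℕ) (hpos : 0 < n) :
    nsatisfiable n φ ↔ fosatisfiable (TransN (Pre := Fin n) (ar := ar) (S := S) φ) :=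
  nsat_iff_transN_sat_general P ar C S φ n hpos

end FOSL
end

section
/- Padding of precisifications preserves satisfaction: if a FOSL formula φ has a model M = (Δ, Π, σ, γ) with |Π| = m ≤ n, then φ has a model with exactly n precisifications; hence m-satisfiability implies n-satisfiability for m ≤ n, for formulas in which every modal subformula □_e ψ is a sentence. -/
namespace FOSL

variable {P : Type} {ar : P → ℕ} {C S : Type}

variable {Q : Type} {arQ : Q → ℕ}

variable {Pre : Type}

/-! Satisfaction is invariant under pulling a standpoint structure back along a surjection of
precisifications: `σ` and the first-order structures are pulled back, and surjectivity makes a box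
over the pullback range over all of `σ(e)`. The padded model is the pullback along the surjection
`Π ⊕ Fin k → Π` sending every fresh copy to `π₀`. -/

instance Model.instNonemptyPrec (M : Model P ar C S) : Nonempty M.Prec := M.prec_ne

def Model.pull (M : Model P ar C S) [Nonempty Pre] (f : Pre → M.Prec) : Model P ar C S where
  Dom := M.Dom
  dom_ne := M.dom_ne
  Prec := Pre
  prec_ne := ‹_›
  σ := fun s => f ⁻¹' M.σ s
  interpP := fun π => M.interpP (f π)
  interpC := M.interpC

namespace Model

variable (M : Model P ar C S) [Nonempty Pre] {f : Pre → M.Prec}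

theorem σE_pull (f : Pre → M.Prec) (e : SE S) : (M.pull f).σE e = f ⁻¹' M.σE e := by
  induction e with
  | star => rfl
  | sym s => rfl
  | union e₁ e₂ ih₁ ih₂ => exact congrArg₂ (· ∪ ·) ih₁ ih₂
  | inter e₁ e₂ ih₁ ih₂ => exact congrArg₂ (· ∩ ·) ih₁ ih₂
  | diff e₁ e₂ ih₁ ih₂ => exact congrArg₂ (· \ ·) ih₁ ih₂

theorem sat_pull (hf : Function.Surjective f) (φ : Fm P ar C S) (π : Pre) (v : ℕ → M.Dom) :
    (M.pull f).sat π v φ ↔ M.sat (f π) v φ := by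
  induction φ generalizing π v with
  | atom p ts => rfl
  | eq t₁ t₂ => rfl
  | neg φ ih => exact not_congr (ih π v)
  | conj φ ψ ihφ ihψ => exact and_congr (ihφ π v) (ihψ π v)
  | all x φ ih => exact forall_congr' fun δ => ih π _
  | box e φ ih =>
    simp only [sat, σE_pull]
    rw [hf.forall]
    exact forall_congr' fun ρ => forall_congr' fun _ => ih ρ v

theorem satM_pull (hf : Function.Surjective f) (φ : Fm P ar C S) :
    (M.pull f).satM φ ↔ M.satM φ :=
  (forall_congr' fun π => forall_congr' fun v => M.sat_pull hf φ π v).trans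
    (hf.forall (p := fun π => ∀ v, M.sat π v φ)).symm

def pad (π₀ : M.Prec) (k : ℕ) : Model P ar C S :=
  M.pull (Sum.elim id fun _ : Fin k => π₀)

theorem satM_pad (π₀ : M.Prec) (k : ℕ) (φ : Fm P ar C S) : (M.pad π₀ k).satM φ ↔ M.satM φ :=
  M.satM_pull (fun ρ => ⟨Sum.inl ρ, rfl⟩) φ

theorem card_prec_pad [Finite M.Prec] (π₀ : M.Prec) (k : ℕ) :
    Nat.card (M.pad π₀ k).Prec = Nat.card M.Prec + k := by
  simp only [pad, pull, Nat.card_sum, Nat.card_eq_fintype_card, Fintype.card_fin]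

end Model

theorem padding_precisifications_general (P : Type) (ar : P → ℕ) (C S : Type)
    (φ : Fm P ar C S)
    (m n : ℕ) (hm : 0 < m) (hmn : m ≤ n) :
    nsatisfiable m φ → nsatisfiable n φ := by
  rintro ⟨M, hsat, hcard⟩
  have : Finite M.Prec := Nat.finite_of_card_ne_zero (hcard ▸ hm.ne')
  obtain ⟨π₀⟩ := M.prec_ne
  refine ⟨M.pad π₀ (n - m), (M.satM_pad π₀ _ φ).mpr hsat, ?_⟩
  rw [M.card_prec_pad, hcard]
  omega

/-- Padding of precisifications preserves satisfaction: for sentential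
formulas, m-satisfiability implies n-satisfiability whenever 0 < m ≤ n. -/
theorem padding_precisifications (P : Type) (ar : P → ℕ) (C S : Type)
    (φ : Fm P ar C S) (hφ : φ.sentential)
    (m n : ℕ) (hm : 0 < m) (hmn : m ≤ n) :
    nsatisfiable m φ → nsatisfiable n φ :=
  padding_precisifications_general P ar C S φ m n hm hmn

end FOSL
end

section
/- There exists a satisfiable (non-sentential) FOSL sentence all of whose models have infinitely many precisifications. Concretely, the conjunction of: transitivity of a binary predicate Btt, asymmetry of Btt, totality of Btt on distinct elements, seriality ∀x ∃y Btt(x,y), and ∀x ◇_* ¬∃y Btt(y,x), is satisfiable, but every standpoint structure satisfying it has an infinite set Π of precisifications. -/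
namespace FOSL

variable {P : Type} {ar : P → ℕ} {C S : Type}

variable {Q : Type} {arQ : Q → ℕ}

variable {Pre : Type}

/-- The signature with a single binary predicate Btt. -/
abbrev BSig : Unit → ℕ := fun _ => 2

def Btt (x y : ℕ) : Fm Unit BSig Empty Empty :=
  .atom () ![Sum.inr x, Sum.inr y]

/-- Transitivity of Btt. -/
def transAx : Fm Unit BSig Empty Empty :=
  .all 0 (.all 1 (.all 2 (Fm.impl (.conj (Btt 0 1) (Btt 1 2)) (Btt 0 2))))

/-- Asymmetry of Btt. -/
def asymAx : Fm Unit BSig Empty Empty :=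
  .all 0 (.all 1 (.neg (.conj (Btt 0 1) (Btt 1 0))))

/-- Totality of Btt on distinct elements. -/
def totalAx : Fm Unit BSig Empty Empty :=
  .all 0 (.all 1 (Fm.impl (.neg (.eq (Sum.inr 0) (Sum.inr 1)))
    (Fm.disj (Btt 0 1) (Btt 1 0))))

/-- Seriality: ∀x ∃y Btt(x,y). -/
def serialAx : Fm Unit BSig Empty Empty :=
  .all 0 (Fm.ex 1 (Btt 0 1))

/-- ∀x ◇_* ¬∃y Btt(y,x). -/
def minAx : Fm Unit BSig Empty Empty :=
  .all 0 (Fm.dia SE.star (.neg (Fm.ex 1 (Btt 1 0))))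

def noSmallModel : Fm Unit BSig Empty Empty :=
  .conj transAx (.conj asymAx (.conj totalAx (.conj serialAx minAx)))

/-! In a model of `noSmallModel` every precisification orders the domain strictly and linearly
with no greatest element, so the domain is infinite, and `minAx` chooses for each element a
precisification in which it is least. A linear order has at most one least element, so this
choice is injective. Conversely, ordering `ℕ` at precisification `π` by the usual order
transported along the swap of `0` and `π` makes `π` least and gives a model. -/

theorem infinite_of_forall_exists_rel {α : Type*} [Nonempty α] (r : α → α → Prop) [IsTrans α r]
    [Std.Irrefl r] (h : ∀ a, ∃ b, r a b) : Infinite α := by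
  by_contra hfin
  have : Finite α := not_infinite_iff_finite.1 hfin
  have : IsTrans α (flip r) := ⟨fun a b c hab hbc => trans_of r hbc hab⟩
  have : Std.Irrefl (flip r) := ⟨irrefl_of r⟩
  obtain ⟨a, -, ha⟩ := (Finite.wellFounded_of_trans_of_irrefl (flip r)).has_min Set.univ
    Set.univ_nonempty
  obtain ⟨b, hab⟩ := h a
  exact ha b trivial hab

theorem injective_of_forall_not_rel {ι α : Type*} (r : ι → α → α → Prop)
    [∀ i, Std.Trichotomous (r i)] {g : α → ι} (hg : ∀ a b, ¬ r (g a) b a) :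
    Function.Injective g := fun a b hab =>
  Std.Trichotomous.trichotomous (r := r (g a)) a b (hab ▸ hg b a) (hg a b)

def Model.btt (M : Model Unit BSig Empty Empty) (π : M.Prec) (a b : M.Dom) : Prop :=
  M.interpP π () ![a, b]

section Axioms

variable {M : Model Unit BSig Empty Empty} {π : M.Prec} {v : ℕ → M.Dom}

theorem sat_Btt (x y : ℕ) : M.sat π v (Btt x y) ↔ M.btt π (v x) (v y) := by
  simp only [Btt, Model.sat, Model.btt]
  congr! 1
  ext i
  fin_cases i <;> rfl

theorem sat_transAx_iff : M.sat π v transAx ↔ IsTrans M.Dom (M.btt π) := by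
  simp only [transAx, Fm.impl, Model.sat, sat_Btt, Function.update_apply, OfNat.zero_ne_ofNat,
    OfNat.one_ne_ofNat, zero_ne_one, ↓reduceIte, not_and, not_not, and_imp]
  exact ⟨fun h => ⟨h⟩, fun ⟨h⟩ => h⟩

theorem sat_asymAx_iff : M.sat π v asymAx ↔ Std.Asymm (M.btt π) := by
  simp only [asymAx, Model.sat, sat_Btt, Function.update_apply, zero_ne_one, ↓reduceIte, not_and]
  exact ⟨fun h => ⟨h⟩, fun ⟨h⟩ => h⟩

theorem sat_totalAx_iff : M.sat π v totalAx ↔ Std.Trichotomous (M.btt π) := by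
  simp only [totalAx, Fm.impl, Fm.disj, Model.sat, Model.termVal, sat_Btt, Function.update_apply,
    zero_ne_one, ↓reduceIte, not_and, not_not, Classical.not_imp]
  exact ⟨fun h => ⟨fun a b hab hba => by_contra fun hne => hba (h a b hne hab)⟩,
    fun ⟨h⟩ a b hne hab => by_contra fun hba => hne (h a b hab hba)⟩

theorem sat_serialAx_iff : M.sat π v serialAx ↔ ∀ a, ∃ b, M.btt π a b := by
  simp only [serialAx, Fm.ex, Model.sat, sat_Btt, Function.update_apply, zero_ne_one, ↓reduceIte,
    not_forall, not_not]

theorem sat_minAx_iff : M.sat π v minAx ↔ ∀ a, ∃ π', ∀ b, ¬ M.btt π' b a := by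
  simp only [minAx, Fm.dia, Fm.ex, Model.sat, Model.σE, sat_Btt, Function.update_apply,
    Set.mem_univ, ↓reduceIte, zero_ne_one, not_forall, not_not, not_exists, forall_const]

end Axioms

theorem Model.satM_noSmallModel_iff (M : Model Unit BSig Empty Empty) :
    M.satM noSmallModel ↔
      (∀ π, IsTrans M.Dom (M.btt π) ∧ Std.Asymm (M.btt π) ∧ Std.Trichotomous (M.btt π) ∧
        ∀ a, ∃ b, M.btt π a b) ∧
      ∀ a, ∃ π, ∀ b, ¬ M.btt π b a := by
  obtain ⟨π₀⟩ := M.prec_ne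
  obtain ⟨a₀⟩ := M.dom_ne
  simp only [Model.satM, noSmallModel, Model.sat, sat_transAx_iff, sat_asymAx_iff,
    sat_totalAx_iff, sat_serialAx_iff, sat_minAx_iff]
  refine ⟨fun h => ⟨fun π => ?_, (h π₀ fun _ => a₀).2.2.2.2⟩, fun ⟨hord, hmin⟩ π _ => ?_⟩
  · obtain ⟨htrans, hasymm, htri, hserial, -⟩ := h π fun _ => a₀
    exact ⟨htrans, hasymm, htri, hserial⟩
  · obtain ⟨htrans, hasymm, htri, hserial⟩ := hord π
    exact ⟨htrans, hasymm, htri, hserial, hmin⟩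

abbrev swapModel : Model Unit BSig Empty Empty where
  Dom := ℕ
  dom_ne := ⟨0⟩
  Prec := ℕ
  prec_ne := ⟨0⟩
  σ := Empty.elim
  interpP π _ args := Equiv.swap 0 π (args 0) < Equiv.swap 0 π (args 1)
  interpC := Empty.elim

theorem swapModel_btt (π : ℕ) : swapModel.btt π = Equiv.swap 0 π ⁻¹'o (· < ·) := rfl

theorem satM_swapModel : swapModel.satM noSmallModel := by
  refine swapModel.satM_noSmallModel_iff.2 ⟨fun π => ?_, fun a => ⟨a, fun b => ?_⟩⟩
  · rw [swapModel_btt]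
    refine ⟨inferInstance, inferInstance,
      (RelEmbedding.preimage (Equiv.swap 0 π).toEmbedding (· < ·)).trichotomous, fun a => ?_⟩
    exact ⟨Equiv.swap 0 π (Equiv.swap 0 π a + 1), by simp [Order.Preimage]⟩
  · simp [swapModel_btt, Order.Preimage]

/-- There is a satisfiable (non-sentential) FOSL sentence all of whose models
have infinitely many precisifications. -/
theorem exists_sentence_only_infinite_models :
    satisfiable noSmallModel ∧
      ∀ M : Model Unit BSig Empty Empty, M.satM noSmallModel →
        Infinite M.Prec := by
  refine ⟨⟨swapModel, satM_swapModel⟩, fun M hM => ?_⟩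
  obtain ⟨hord, hmin⟩ := M.satM_noSmallModel_iff.1 hM
  obtain ⟨π₀⟩ := M.prec_ne
  have : Infinite M.Dom := by
    obtain ⟨_, _, -, hserial⟩ := hord π₀
    have := M.dom_ne
    exact infinite_of_forall_exists_rel (M.btt π₀) hserial
  have := fun π => (hord π).2.2.1
  choose g hg using hmin
  exact Infinite.of_injective g (injective_of_forall_not_rel M.btt hg)

end FOSL
end
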